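/- arXiv:1810.06017 — 3 statements merged into one kernel-verified Lean document; each statement's English description precedes it below -/
import Mathlib

section
/- With notation as in the construction over F_2: for u ∈ [0,m) and v1, v2 ∈ [0,q) with v1 ≠ v2, the set of vectors { e_s · C_{u,v1,v2} : s ∈ V_{u,v1} } equals exactly { e_t : t ∈ V_{u,v2} }, i.e., E_{u,v1} C_{u,v1,v2} = E_{u,v2}. -/
def Cmat (q m : ℕ) (u : Fin m) (v3 : Fin (q + 1)) (v2 : Fin q) :
    Matrix (Fin m → Fin q) (Fin m → Fin q) (ZMod 2) :=
  Matrix.of fun s t =>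
    if h : (v3 : ℕ) < q then
      (if s u = (⟨(v3 : ℕ), h⟩ : Fin q) then
        (Pi.single (Function.update s u v2) (1 : ZMod 2) : (Fin m → Fin q) → ZMod 2) t else 0) +
      (if s u = v2 then (Pi.single s (1 : ZMod 2) : (Fin m → Fin q) → ZMod 2) t else 0)
    else
      (if s u = v2 then (Pi.single s (1 : ZMod 2) : (Fin m → Fin q) → ZMod 2) t else 0)

lemma row_eq (q m : ℕ) (u : Fin m) (v1 v2 : Fin q) (hne : v1 ≠ v2) (s : Fin m → Fin q)
    (hs : s u = v1) :
    Matrix.vecMul (Pi.single s (1 : ZMod 2)) (Cmat q m u (Fin.castSucc v1) v2)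
      = Pi.single (Function.update s u v2) 1 := by
  rw [Matrix.single_one_vecMul]
  have h1 : s u ≠ v2 := by rw [hs]; exact hne
  funext t
  simp [Cmat, hs, h1, v1.isLt, Fin.ext_iff, Fin.val_ne_of_ne hne]

/-- Lemma 1 (II), first part: for `v1 ≠ v2`, the set of vectors `e_s · C_{u,v1,v2}` with
`s ∈ V_{u,v1}` equals exactly `E_{u,v2} = {e_t : t u = v2}`. -/
theorem stmt6 (q m : ℕ) (u : Fin m) (v1 v2 : Fin q) (hne : v1 ≠ v2) :
    (fun s : Fin m → Fin q =>
        Matrix.vecMul (Pi.single s (1 : ZMod 2)) (Cmat q m u (Fin.castSucc v1) v2)) ''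
      {s | s u = v1}
    = (fun t : Fin m → Fin q =>
        (Pi.single t (1 : ZMod 2) : (Fin m → Fin q) → ZMod 2)) '' {t | t u = v2} := by
  ext w
  simp only [Set.mem_image, Set.mem_setOf_eq]
  constructor
  · rintro ⟨s, hs, rfl⟩
    exact ⟨Function.update s u v2, Function.update_self .., (row_eq q m u v1 v2 hne s hs).symm⟩
  · rintro ⟨t, ht, rfl⟩
    refine ⟨Function.update t u v1, Function.update_self .., ?_⟩
    rw [row_eq q m u v1 v2 hne _ (Function.update_self ..)]
    have h2 : Function.update t u v2 = t := by rw [← ht, Function.update_eq_self]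
    rw [Function.update_idem, h2]
end

section
/- With notation as in the construction over F_2: for u1 ≠ u2 in [0,m) and any v2 ∈ [0,q), every vector x · C_{u2,q,v2} with x ∈ Q_{u1} lies in the span of Q_{u1}; and for u1 ∈ [0,m), any v3 ∈ [0,q), v2 ∈ [0,q) with v3 ≠ v2, every vector x · C_{u2,v3,v2} with x ∈ Q_{u1} and u2 = u1 equals the zero vector. -/
/-- The vector `q_s = Σ_{a ∈ [0,q)} e_{(s with u-th digit set to a)}` over `F_2`. -/
def qvec (q m : ℕ) (u : Fin m) (s : Fin m → Fin q) : (Fin m → Fin q) → ZMod 2 :=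
  ∑ a : Fin q, Pi.single (Function.update s u a) (1 : ZMod 2)

open Function

variable {q m : ℕ}

lemma vecMul_qvec (u : Fin m) (s : Fin m → Fin q)
    (M : Matrix (Fin m → Fin q) (Fin m → Fin q) (ZMod 2)) :
    Matrix.vecMul (qvec q m u s) M = ∑ a : Fin q, M (update s u a) := by
  ext t
  simp only [Matrix.vecMul, dotProduct, qvec, Finset.sum_apply, Finset.sum_mul]
  rw [Finset.sum_comm]
  simp [Pi.single_apply, ite_mul]

lemma Cmat_last_row (u : Fin m) (v2 : Fin q) (s : Fin m → Fin q) :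
    Cmat q m u (Fin.last q) v2 s = if s u = v2 then Pi.single s 1 else 0 := by
  ext t
  simp [Cmat, apply_ite (fun f : (Fin m → Fin q) → ZMod 2 => f t)]

lemma Cmat_castSucc_row (u : Fin m) (v3 v2 : Fin q) (s : Fin m → Fin q) :
    Cmat q m u (Fin.castSucc v3) v2 s =
      (if s u = v3 then Pi.single (update s u v2) 1 else 0) +
        (if s u = v2 then Pi.single s 1 else 0) := by
  ext t
  simp [Cmat, apply_ite (fun f : (Fin m → Fin q) → ZMod 2 => f t)]

lemma vecMul_qvec_Cmat_last_of_ne {u1 u2 : Fin m} (h : u1 ≠ u2) (v2 : Fin q)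
    (s : Fin m → Fin q) :
    Matrix.vecMul (qvec q m u1 s) (Cmat q m u2 (Fin.last q) v2) =
      if s u2 = v2 then qvec q m u1 s else 0 := by
  simp only [vecMul_qvec, Cmat_last_row, update_of_ne h.symm]
  split_ifs <;> simp [qvec]

-- Only `a = v3` and `a = v2` contribute, both the row `e_{ϕ_{u,v2}(s)}`, so they cancel over `F_2`.
lemma vecMul_qvec_Cmat_castSucc (u : Fin m) (v3 v2 : Fin q) (s : Fin m → Fin q) :
    Matrix.vecMul (qvec q m u s) (Cmat q m u (Fin.castSucc v3) v2) = 0 := by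
  have hrow : ∀ a : Fin q, Cmat q m u (Fin.castSucc v3) v2 (update s u a) =
      (if a = v3 then Pi.single (update s u v2) 1 else 0) +
        (if a = v2 then Pi.single (update s u v2) 1 else 0) := by
    intro a
    rw [Cmat_castSucc_row, update_self, update_idem]
    by_cases ha : a = v2
    · rw [ha]
    · simp [ha]
  simp only [vecMul_qvec, hrow, Finset.sum_add_distrib, Finset.sum_ite_eq', Finset.mem_univ,
    if_true]
  ext t
  exact CharTwo.add_self_eq_zero _

/-- Lemma 1 (III), second part: if `u1 ≠ u2` then every `x · C_{u2,q,v2}` with `x ∈ Q_{u1}`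
lies in the span of `Q_{u1}`; and if `v3 < q` with `v3 ≠ v2` then `x · C_{u1,v3,v2} = 0`
for every `x ∈ Q_{u1}` (the two equal summands cancel over `F_2`). -/
theorem stmt9 (q m : ℕ) (u1 u2 : Fin m) (v2 : Fin q) :
    (∀ (_ : u1 ≠ u2) (s : Fin m → Fin q),
      Matrix.vecMul (qvec q m u1 s) (Cmat q m u2 (Fin.last q) v2) ∈
        Submodule.span (ZMod 2) (Set.range (qvec q m u1))) ∧
    (∀ v3 : Fin q, v3 ≠ v2 → ∀ s : Fin m → Fin q,
      Matrix.vecMul (qvec q m u1 s) (Cmat q m u1 (Fin.castSucc v3) v2) = 0) := by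
  refine ⟨fun h s => ?_, fun v3 _ s => vecMul_qvec_Cmat_castSucc u1 v3 v2 s⟩
  rw [vecMul_qvec_Cmat_last_of_ne h]
  split_ifs
  · exact Submodule.subset_span ⟨s, rfl⟩
  · exact Submodule.zero_mem _
end

section
/- Let q ≥ 2, 1 ≤ z < q, h = ⌊(q−1)/(q−z)⌋, and for v ∈ [0,q), ε ∈ [0,h) define G_{v,ε} = { v+1+ε(q−z), …, v+(q−z)+ε(q−z) } mod q. Then |G_{v,ε}| = q−z, G_{v,ε} does not contain v, and for fixed v the sets G_{v,0}, …, G_{v,h−1} are pairwise disjoint. -/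
/-!
Writing `m = q - z`, the set `G_{v,ε}` is the image of the block of offsets
`1 + εm, …, m + εm` under `o ↦ (v + o) mod q`. For `ε < (q - 1) / m` these blocks lie in
`[1, q)`, where that map is injective and sends only the offset `0` to `v`; the three claims
are then statements about the blocks themselves.
-/

open Finset

lemma add_mod_injOn_Iio (q v : ℕ) : Set.InjOn (fun o => (v + o) % q) (Set.Iio q) :=
  fun _ h₁ _ h₂ heq => (Nat.ModEq.add_left_cancel' v heq).eq_of_lt_of_lt h₁ h₂

lemma succ_mul_lt_of_lt_pred_div {q m ε : ℕ} (hε : ε < (q - 1) / m) : (ε + 1) * m < q := by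
  have hq : 0 < q - 1 := Nat.pos_of_ne_zero fun h => by simp [h] at hε
  calc (ε + 1) * m ≤ (q - 1) / m * m := Nat.mul_le_mul_right m hε
    _ ≤ q - 1 := Nat.div_mul_le_self (q - 1) m
    _ < q := by omega

lemma Icc_mul_add_subset_Iio {q m ε : ℕ} (hε : (ε + 1) * m < q) :
    (Icc (1 + ε * m) (m + ε * m) : Set ℕ) ⊆ Set.Iio q := by
  intro o ho
  simp only [coe_Icc, Set.mem_Icc, Set.mem_Iio] at ho ⊢
  linarith [ho.2, add_one_mul ε m]

lemma disjoint_Icc_mul_add {m a b : ℕ} (hab : a ≠ b) :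
    Disjoint (Icc (1 + a * m) (m + a * m)) (Icc (1 + b * m) (m + b * m)) := by
  wlog hlt : a < b generalizing a b
  · exact (this hab.symm (by omega)).symm
  have : m + a * m ≤ b * m := by
    simpa [add_one_mul, add_comm] using Nat.mul_le_mul_right m (Nat.succ_le_of_lt hlt)
  rw [disjoint_left]
  intro o ho ho'
  simp only [mem_Icc] at ho ho'
  omega

lemma Finset.disjoint_image_of_injOn {α β : Type*} [DecidableEq β] {f : α → β} {u : Set α}
    {s t : Finset α} (hf : Set.InjOn f u) (hs : ↑s ⊆ u) (ht : ↑t ⊆ u) (hst : Disjoint s t) :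
    Disjoint (s.image f) (t.image f) := by
  rw [← disjoint_coe, coe_image, coe_image, Set.disjoint_iff_inter_eq_empty,
    ← hf.image_inter hs ht, (disjoint_coe.2 hst).inter_eq, Set.image_empty]

lemma image_Icc_add_mul (q v m ε : ℕ) :
    (Icc 1 m).image (fun i => (v + i + ε * m) % q) =
      (Icc (1 + ε * m) (m + ε * m)).image (fun o => (v + o) % q) := by
  rw [← image_add_right_Icc 1 m (ε * m), image_image]
  simp only [Function.comp_def, add_assoc]

theorem stmt10_general (q z : ℕ) :
    let h := (q - 1) / (q - z)
    let G : ℕ → ℕ → Finset ℕ :=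
      fun v ε => (Finset.Icc 1 (q - z)).image (fun i => (v + i + ε * (q - z)) % q)
    (∀ v < q, ∀ ε < h, (G v ε).card = q - z ∧ v ∉ G v ε) ∧
    (∀ v < q, ∀ ε1 < h, ∀ ε2 < h, ε1 ≠ ε2 → Disjoint (G v ε1) (G v ε2)) := by
  intro h G
  set m := q - z
  have hG (v ε : ℕ) : G v ε = (Icc (1 + ε * m) (m + ε * m)).image (fun o => (v + o) % q) :=
    image_Icc_add_mul q v m ε
  have hblock {ε : ℕ} (hε : ε < h) := Icc_mul_add_subset_Iio (succ_mul_lt_of_lt_pred_div hε)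
  refine ⟨fun v hv ε hε => ⟨?_, ?_⟩, fun v _ ε₁ hε₁ ε₂ hε₂ hne => ?_⟩
  · rw [hG, card_image_of_injOn ((add_mod_injOn_Iio q v).mono (hblock hε)), Nat.card_Icc]
    omega
  · rw [hG, mem_image]
    rintro ⟨o, ho, hov⟩
    have h0 : (v + 0) % q = (v + o) % q := by rw [hov, add_zero, Nat.mod_eq_of_lt hv]
    have := add_mod_injOn_Iio q v (Set.mem_Iio.2 (by omega)) (hblock hε ho) h0
    simp only [mem_Icc] at ho
    omega
  · rw [hG, hG]
    exact disjoint_image_of_injOn (add_mod_injOn_Iio q v) (hblock hε₁) (hblock hε₂)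
      (disjoint_Icc_mul_add hne)

/-- For `q ≥ 2`, `1 ≤ z < q`, `h = ⌊(q-1)/(q-z)⌋` and
`G_{v,ε} = {(v + i + ε(q-z)) mod q : 1 ≤ i ≤ q-z}`:
`|G_{v,ε}| = q - z`, `v ∉ G_{v,ε}`, and for fixed `v` the sets `G_{v,0}, …, G_{v,h-1}`
are pairwise disjoint. -/
theorem stmt10 (q z : ℕ) (hq : 2 ≤ q) (hz1 : 1 ≤ z) (hzq : z < q) :
    let h := (q - 1) / (q - z)
    let G : ℕ → ℕ → Finset ℕ :=
      fun v ε => (Finset.Icc 1 (q - z)).image (fun i => (v + i + ε * (q - z)) % q)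
    (∀ v < q, ∀ ε < h, (G v ε).card = q - z ∧ v ∉ G v ε) ∧
    (∀ v < q, ∀ ε1 < h, ∀ ε2 < h, ε1 ≠ ε2 → Disjoint (G v ε1) (G v ε2)) :=
  stmt10_general q z
end
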